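/- Let n = 2^b + 2^a with b > a ≥ 0, and let s be an odd positive integer such that s divides C(n, 2^a). Suppose further that there exists an integer k with 1 ≤ k ≤ n−1, k ∉ {2^a, 2^b}, such that s divides C(n, k). Then the cyclotomic polynomial Φ_{2s}(t) divides the descent set polynomial Q_n(t). -/

import Mathlib

/-!
If `j ∉ S`, the permutations with descent set `S` or `S ∪ {j}` are those whose descents other
than `j` form `S`. Recording the set of the first `j` values and standardizing the two blocks
gives `β_n(S) + β_n(S ∪ {j}) = C(n, j) β_j(S ∩ [1, j-1]) β_{n-j}((S ∩ [j+1, n-1]) - j)`.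
As `C(2^c, j)` is even for `0 < j < 2^c`, every `β_{2^c}(S)` is odd.

For `n = 2^b + 2^a`, pair `S` with `S' = S ∆ {k} ∆ {2^a}`. Going through `S ∆ {k}`, the identity
gives `β_n(S') ≡ β_n(S) + s (mod 2s)`: `2s` divides `C(n, k)`, while `C(n, 2^a) β_{2^a} β_{2^b}`
is an odd multiple of `s`. Since `X^s ≡ -1` modulo `Φ_{2s}`, each pair `X^{β(S)} + X^{β(S')}`
vanishes modulo `Φ_{2s}`, and so does `Q_n`.
-/

/-- The descent set of a permutation of `Fin n`, as a subset of `[n-1] = {1,…,n-1}`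
(1-based positions): `i` is a descent if `π(i) > π(i+1)`. -/
def descentSet (n : ℕ) (π : Equiv.Perm (Fin n)) : Finset ℕ :=
  (Finset.Ico 1 n).filter fun i => ∀ h : i < n, π ⟨i, h⟩ < π ⟨i - 1, by omega⟩

/-- The descent set statistic `β_n(S)`: the number of permutations of `{1,…,n}`
with descent set `S`. -/
def beta (n : ℕ) (S : Finset ℕ) : ℕ :=
  (Finset.univ.filter fun π : Equiv.Perm (Fin n) => descentSet n π = S).card

/-- The descent set polynomial `Q_n(t) = ∑_{S ⊆ [n-1]} t^{β_n(S)}`. -/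
noncomputable def Q (n : ℕ) : Polynomial ℤ :=
  ∑ S ∈ (Finset.Ico 1 n).powerset, Polynomial.X ^ beta n S

open Finset Polynomial
open scoped symmDiff

section Descents

variable {α : Type*} [LinearOrder α]

def descents {n : ℕ} (f : Fin n → α) : Finset ℕ :=
  (Ico 1 n).filter fun i => ∀ h : i < n, f ⟨i, h⟩ < f ⟨i - 1, by omega⟩

theorem descentSet_eq_descents (n : ℕ) (π : Equiv.Perm (Fin n)) :
    descentSet n π = descents π := rfl

theorem mem_descents {n i : ℕ} {f : Fin n → α} :
    i ∈ descents f ↔ ∃ (h₁ : 1 ≤ i) (h₂ : i < n), f ⟨i, h₂⟩ < f ⟨i - 1, by omega⟩ := by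
  simp only [descents, mem_filter, mem_Ico]
  exact ⟨fun ⟨⟨h₁, h₂⟩, h⟩ => ⟨h₁, h₂, h h₂⟩, fun ⟨h₁, h₂, h⟩ => ⟨⟨h₁, h₂⟩, fun _ => h⟩⟩

theorem descents_subset {n : ℕ} (f : Fin n → α) : descents f ⊆ Ico 1 n := filter_subset _ _

theorem descents_comp_of_strictMono {β : Type*} [LinearOrder β] {n : ℕ} {g : α → β}
    (hg : StrictMono g) (f : Fin n → α) : descents (g ∘ f) = descents f := by
  simp only [descents, Function.comp_apply, hg.lt_iff_lt]

theorem monotone_of_descents_eq_empty {n : ℕ} {f : Fin n → α} (h : descents f = ∅) :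
    Monotone f := by
  cases n with
  | zero => exact fun i => i.elim0
  | succ n =>
    refine Fin.monotone_iff_le_succ.2 fun i => ?_
    have hi : (i : ℕ) + 1 ∉ descents f := h ▸ notMem_empty _
    simp only [mem_descents, not_exists, not_lt] at hi
    exact hi (by omega) (by omega)

theorem descents_erase_eq {k m : ℕ} (f : Fin (k + m) → α) :
    (descents f).erase k =
      descents (f ∘ Fin.castAdd m) ∪ (descents (f ∘ Fin.natAdd k)).map (addRightEmbedding k) := by
  ext j
  simp only [mem_erase, mem_union, mem_map, mem_descents, addRightEmbedding_apply,
    Function.comp_apply]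
  rcases lt_trichotomy j k with hj | rfl | hj
  · constructor
    · rintro ⟨-, h₁, h₂, h⟩
      exact Or.inl ⟨h₁, hj, h⟩
    · rintro (⟨h₁, h₂, h⟩ | ⟨i, ⟨h₁, h₂, h⟩, rfl⟩)
      · exact ⟨hj.ne, h₁, by omega, h⟩
      · omega
  · simp
  · constructor
    · rintro ⟨-, h₁, h₂, h⟩
      refine Or.inr ⟨j - k, ⟨by omega, by omega, ?_⟩, by omega⟩
      convert h using 2 <;> ext <;> simp <;> omega
    · rintro (⟨h₁, h₂, h⟩ | ⟨i, ⟨h₁, h₂, h⟩, rfl⟩)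
      · omega
      · refine ⟨by omega, by omega, by omega, ?_⟩
        convert h using 2 <;> ext <;> simp <;> omega

end Descents

theorem exists_perm_orderEmbOfFin_comp_eq {α : Type*} [LinearOrder α] {k : ℕ} {f : Fin k → α}
    (hf : Function.Injective f) {A : Finset α} (hA : #A = k) (hfA : ∀ i, f i ∈ A) :
    ∃ σ : Equiv.Perm (Fin k), A.orderEmbOfFin hA ∘ σ = f := by
  let g (i : Fin k) : Fin k := (A.orderIsoOfFin hA).symm ⟨f i, hfA i⟩
  have hg : Function.Injective g := fun i j h => hf <| by simpa [g] using h
  refine ⟨Equiv.ofBijective g (Finite.injective_iff_bijective.1 hg), funext fun i => ?_⟩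
  simp [g, ← coe_orderIsoOfFin_apply]

section Shuffle

variable {k m : ℕ}

theorem card_compl_of_card_eq {A : Finset (Fin (k + m))} (hA : #A = k) : #Aᶜ = m := by
  rw [card_compl, Fintype.card_fin, hA, Nat.add_sub_cancel_left]

noncomputable def shuffle (A : Finset (Fin (k + m))) (hA : #A = k) (σ : Equiv.Perm (Fin k))
    (τ : Equiv.Perm (Fin m)) : Equiv.Perm (Fin (k + m)) :=
  Equiv.ofBijective
    (Fin.append (A.orderEmbOfFin hA ∘ σ) (Aᶜ.orderEmbOfFin (card_compl_of_card_eq hA) ∘ τ)) <|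
    Finite.injective_iff_bijective.1 <| Fin.append_injective_iff.2
      ⟨(A.orderEmbOfFin hA).injective.comp σ.injective,
        (Aᶜ.orderEmbOfFin _).injective.comp τ.injective,
        fun i j h => mem_compl.1 (orderEmbOfFin_mem Aᶜ _ (τ j))
          ((congrArg (· ∈ A) h).mp (orderEmbOfFin_mem A hA (σ i)))⟩

section

variable {A : Finset (Fin (k + m))} (hA : #A = k) (σ : Equiv.Perm (Fin k))
  (τ : Equiv.Perm (Fin m))

theorem shuffle_comp_castAdd : shuffle A hA σ τ ∘ Fin.castAdd m = A.orderEmbOfFin hA ∘ σ :=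
  funext fun _ => by simp [shuffle]

theorem shuffle_comp_natAdd :
    shuffle A hA σ τ ∘ Fin.natAdd k = Aᶜ.orderEmbOfFin (card_compl_of_card_eq hA) ∘ τ :=
  funext fun _ => by simp [shuffle]

theorem descents_shuffle_comp_castAdd :
    descents (shuffle A hA σ τ ∘ Fin.castAdd m) = descents σ := by
  rw [shuffle_comp_castAdd, descents_comp_of_strictMono (OrderEmbedding.strictMono _)]

theorem descents_shuffle_comp_natAdd :
    descents (shuffle A hA σ τ ∘ Fin.natAdd k) = descents τ := by
  rw [shuffle_comp_natAdd, descents_comp_of_strictMono (OrderEmbedding.strictMono _)]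

theorem image_shuffle_comp_castAdd : univ.image (shuffle A hA σ τ ∘ Fin.castAdd m) = A := by
  rw [shuffle_comp_castAdd, ← image_image, image_univ_equiv, image_orderEmbOfFin_univ]

end

theorem shuffle_inj {A A' : Finset (Fin (k + m))} {hA : #A = k} {hA' : #A' = k}
    {σ σ' : Equiv.Perm (Fin k)} {τ τ' : Equiv.Perm (Fin m)}
    (h : shuffle A hA σ τ = shuffle A' hA' σ' τ') : A = A' ∧ σ = σ' ∧ τ = τ' := by
  obtain rfl : A = A' := by
    rw [← image_shuffle_comp_castAdd hA σ τ, ← image_shuffle_comp_castAdd hA' σ' τ', h]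
  have h₁ := shuffle_comp_castAdd hA σ τ
  have h₂ := shuffle_comp_natAdd hA σ τ
  rw [h, shuffle_comp_castAdd] at h₁
  rw [h, shuffle_comp_natAdd] at h₂
  exact ⟨rfl, Equiv.ext fun i => (A.orderEmbOfFin hA).injective (congrFun h₁ i).symm,
    Equiv.ext fun j => (Aᶜ.orderEmbOfFin _).injective (congrFun h₂ j).symm⟩

theorem exists_shuffle_eq (π : Equiv.Perm (Fin (k + m))) :
    ∃ (A : Finset (Fin (k + m))) (hA : #A = k) (σ : Equiv.Perm (Fin k)) (τ : Equiv.Perm (Fin m)),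
      shuffle A hA σ τ = π := by
  set A := univ.image (π ∘ Fin.castAdd m)
  have hinj : Function.Injective (π ∘ Fin.castAdd m) :=
    π.injective.comp (Fin.castAdd_injective _ _)
  have hA : #A = k := by rw [card_image_of_injective _ hinj, card_univ, Fintype.card_fin]
  have hcompl (j : Fin m) : π (Fin.natAdd k j) ∈ Aᶜ := by
    simp only [A, mem_compl, mem_image, mem_univ, true_and, Function.comp_apply,
      π.apply_eq_iff_eq, not_exists, Fin.ext_iff, Fin.val_castAdd, Fin.val_natAdd]
    omega
  obtain ⟨σ, hσ⟩ :=
    exists_perm_orderEmbOfFin_comp_eq hinj hA fun i => mem_image_of_mem _ (mem_univ i)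
  obtain ⟨τ, hτ⟩ := exists_perm_orderEmbOfFin_comp_eq
    (π.injective.comp (Fin.natAdd_injective _ _)) (card_compl_of_card_eq hA) hcompl
  refine ⟨A, hA, σ, τ, Equiv.ext fun x => Fin.addCases (fun i => ?_) (fun j => ?_) x⟩
  · exact congrFun ((shuffle_comp_castAdd hA σ τ).trans hσ) i
  · exact congrFun ((shuffle_comp_natAdd hA σ τ).trans hτ) j

end Shuffle

theorem card_filter_descents_castAdd_natAdd (k m : ℕ) (S₁ S₂ : Finset ℕ) :
    #{π : Equiv.Perm (Fin (k + m)) |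
        descents (π ∘ Fin.castAdd m) = S₁ ∧ descents (π ∘ Fin.natAdd k) = S₂} =
      (k + m).choose k * (beta k S₁ * beta m S₂) := by
  have hcard : #(powersetCard k (univ : Finset (Fin (k + m))) ×ˢ
      (({σ : Equiv.Perm (Fin k) | descents σ = S₁} : Finset _) ×ˢ
        ({τ : Equiv.Perm (Fin m) | descents τ = S₂} : Finset _))) =
      (k + m).choose k * (beta k S₁ * beta m S₂) := by
    rw [card_product, card_product, card_powersetCard, card_univ, Fintype.card_fin]
    rfl
  rw [← hcard]
  refine (card_bij
    (fun x hx => shuffle x.1 (mem_powersetCard.1 (mem_product.1 hx).1).2 x.2.1 x.2.2)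
    ?_ ?_ ?_).symm
  · rintro ⟨A, σ, τ⟩ hx
    simp only [mem_product, mem_powersetCard, mem_filter_univ] at hx ⊢
    rw [descents_shuffle_comp_castAdd, descents_shuffle_comp_natAdd]
    exact hx.2
  · rintro ⟨A, σ, τ⟩ hx ⟨A', σ', τ'⟩ hx' h
    obtain ⟨rfl, rfl, rfl⟩ := shuffle_inj h
    rfl
  · intro π hπ
    obtain ⟨A, hA, σ, τ, rfl⟩ := exists_shuffle_eq π
    rw [mem_filter_univ, descents_shuffle_comp_castAdd, descents_shuffle_comp_natAdd] at hπ
    exact ⟨(A, σ, τ), by simp [hA, hπ], rfl⟩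

theorem beta_empty (n : ℕ) : beta n ∅ = 1 := by
  rw [beta, card_eq_one]
  refine ⟨1, eq_singleton_iff_unique_mem.2 ⟨?_, fun π hπ => ?_⟩⟩
  · rw [mem_filter_univ, descentSet_eq_descents]
    ext i
    simp [mem_descents, Fin.lt_def]
  · rw [mem_filter_univ, descentSet_eq_descents] at hπ
    exact Equiv.ext <| congrFun
      ((monotone_of_descents_eq_empty hπ).strictMono_of_injective π.injective).eq_id

def lowerPart (k : ℕ) (S : Finset ℕ) : Finset ℕ := S.filter (· < k)

def upperPart (k : ℕ) (S : Finset ℕ) : Finset ℕ := (S.filter (k < ·)).image (· - k)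

theorem lowerPart_erase_self (k : ℕ) (S : Finset ℕ) :
    lowerPart k (S.erase k) = lowerPart k S := by
  ext
  simp [lowerPart]
  omega

theorem upperPart_erase_self (k : ℕ) (S : Finset ℕ) :
    upperPart k (S.erase k) = upperPart k S := by
  ext
  simp [upperPart]
  grind

theorem lowerPart_subset {n j : ℕ} {S : Finset ℕ} (hS : S ⊆ Ico 1 n) :
    lowerPart j S ⊆ Ico 1 j := fun x hx => by
  rw [lowerPart, mem_filter] at hx
  have := mem_Ico.1 (hS hx.1)
  exact mem_Ico.2 ⟨this.1, hx.2⟩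

theorem upperPart_subset {n j : ℕ} {S : Finset ℕ} (hS : S ⊆ Ico 1 n) :
    upperPart j S ⊆ Ico 1 (n - j) := fun x hx => by
  obtain ⟨y, hy, rfl⟩ := mem_image.1 hx
  rw [mem_filter] at hy
  have := mem_Ico.1 (hS hy.1)
  exact mem_Ico.2 ⟨by omega, by omega⟩

theorem union_map_addRightEmbedding_eq_iff {k m : ℕ} {S D₁ D₂ : Finset ℕ} (hkS : k ∉ S)
    (hD₁ : D₁ ⊆ Ico 1 k) (hD₂ : D₂ ⊆ Ico 1 m) :
    D₁ ∪ D₂.map (addRightEmbedding k) = S ↔ D₁ = lowerPart k S ∧ D₂ = upperPart k S := by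
  have h₁ (x : ℕ) (hx : x ∈ D₁) : x < k := (mem_Ico.1 (hD₁ hx)).2
  have h₂ (x : ℕ) (hx : x ∈ D₂) : 1 ≤ x := (mem_Ico.1 (hD₂ hx)).1
  constructor
  · rintro rfl
    constructor
    · ext x
      simp only [lowerPart, mem_filter, mem_union, mem_map, addRightEmbedding_apply]
      grind
    · ext x
      simp only [upperPart, mem_image, mem_filter, mem_union, mem_map, addRightEmbedding_apply]
      constructor
      · intro hx
        exact ⟨x + k, ⟨Or.inr ⟨x, hx, rfl⟩, by grind⟩, by omega⟩
      · rintro ⟨_, ⟨ha | ⟨b, hb, rfl⟩, hka⟩, rfl⟩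
        · grind
        · simpa using hb
  · rintro ⟨rfl, rfl⟩
    ext x
    simp only [lowerPart, upperPart, mem_filter, mem_union, mem_map, mem_image,
      addRightEmbedding_apply]
    grind

theorem erase_eq_iff_eq_or_eq_insert {α : Type*} [DecidableEq α] {s t : Finset α} {a : α}
    (hat : a ∉ t) : s.erase a = t ↔ s = t ∨ s = insert a t := by
  by_cases has : a ∈ s
  · rw [erase_eq_iff_eq_insert has hat]
    exact ⟨Or.inr, fun h => h.resolve_left (by rintro rfl; exact hat has)⟩
  · rw [erase_eq_of_notMem has]
    exact ⟨Or.inl, fun h => h.resolve_right (by rintro rfl; exact has (mem_insert_self a t))⟩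

theorem beta_add_beta_insert {n j : ℕ} {S : Finset ℕ} (hj : j ≤ n) (hjS : j ∉ S) :
    beta n S + beta n (insert j S) =
      n.choose j * (beta j (lowerPart j S) * beta (n - j) (upperPart j S)) := by
  obtain ⟨m, rfl⟩ := Nat.exists_eq_add_of_le hj
  have hdisj : Disjoint ({π : Equiv.Perm (Fin (j + m)) | descentSet _ π = S} : Finset _)
      ({π | descentSet _ π = insert j S} : Finset _) :=
    disjoint_filter.2 fun π _ h h' => hjS (by rw [← h, h']; exact mem_insert_self j S)
  rw [Nat.add_sub_cancel_left, ← card_filter_descents_castAdd_natAdd, beta, beta,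
    ← card_union_of_disjoint hdisj, ← filter_or]
  congr 1
  refine filter_congr fun π _ => ?_
  rw [descentSet_eq_descents, ← erase_eq_iff_eq_or_eq_insert hjS, descents_erase_eq,
    union_map_addRightEmbedding_eq_iff hjS (descents_subset _) (descents_subset _)]

theorem beta_symmDiff_singleton_add {n j : ℕ} (hj : j ≤ n) (S : Finset ℕ) :
    beta n (S ∆ {j}) + beta n S =
      n.choose j * (beta j (lowerPart j S) * beta (n - j) (upperPart j S)) := by
  by_cases hjS : j ∈ S
  · have h := beta_add_beta_insert hj (S.notMem_erase j)
    rwa [insert_erase hjS, lowerPart_erase_self, upperPart_erase_self,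
      ← sdiff_singleton_eq_erase, ← symmDiff_of_ge (singleton_subset_iff.2 hjS)] at h
  · rw [add_comm, symmDiff_comm, (symmDiff_eq_sup _ _).2 (disjoint_singleton_left.2 hjS),
      sup_eq_union, ← insert_eq]
    exact beta_add_beta_insert hj hjS

theorem odd_beta_two_pow (c : ℕ) {S : Finset ℕ} (hS : S ⊆ Ico 1 (2 ^ c)) :
    Odd (beta (2 ^ c) S) := by
  induction S using Finset.induction_on with
  | empty => rw [beta_empty]; exact odd_one
  | insert j S hjS ih =>
    rw [insert_subset_iff, mem_Ico] at hS
    have h := beta_add_beta_insert hS.1.2.le hjS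
    obtain ⟨t, ht⟩ : 2 ∣ (2 ^ c).choose j := Nat.prime_two.dvd_choose_pow (by omega) hS.1.2.ne
    rw [ht, mul_assoc] at h
    have := ih hS.2
    rw [Nat.odd_iff] at this ⊢
    omega

theorem choose_two_pow_add_two_pow_cast (a b i : ℕ) :
    ((2 ^ b + 2 ^ a).choose i : ZMod 2) =
      ((X ^ 2 ^ b + 1) * (X ^ 2 ^ a + 1) : (ZMod 2)[X]).coeff i := by
  rw [← coeff_X_add_one_pow, pow_add, add_pow_char_pow, add_pow_char_pow, one_pow, one_pow]

theorem two_dvd_choose_two_pow_add_two_pow {a b i : ℕ} (h₀ : i ≠ 0) (ha : i ≠ 2 ^ a)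
    (hb : i ≠ 2 ^ b) (hab : i ≠ 2 ^ b + 2 ^ a) : 2 ∣ (2 ^ b + 2 ^ a).choose i := by
  rw [← ZMod.natCast_eq_zero_iff, choose_two_pow_add_two_pow_cast]
  simp [add_mul, mul_add, ← pow_add, coeff_X_pow, coeff_one, h₀, ha, hb, hab]

theorem odd_choose_two_pow_add_two_pow {a b : ℕ} (hab : a ≠ b) :
    Odd ((2 ^ b + 2 ^ a).choose (2 ^ a)) := by
  rw [← ZMod.natCast_eq_one_iff_odd, choose_two_pow_add_two_pow_cast]
  simp [add_mul, mul_add, ← pow_add, coeff_X_pow, coeff_one, hab]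

theorem cyclotomic_two_mul_dvd_X_pow_add_one {s : ℕ} (hs : 0 < s) :
    cyclotomic (2 * s) ℤ ∣ X ^ s + 1 := by
  have h := X_pow_sub_one_mul_cyclotomic_dvd_X_pow_sub_one_of_dvd ℤ
    (Nat.mem_properDivisors.2 ⟨dvd_mul_left s 2, by omega⟩)
  rw [show (X : ℤ[X]) ^ (2 * s) - 1 = (X ^ s - 1) * (X ^ s + 1) by ring] at h
  exact (mul_dvd_mul_iff_left (by simpa using X_pow_sub_C_ne_zero hs (1 : ℤ))).1 h

theorem cyclotomic_two_mul_dvd_X_pow_add_X_pow {s u v : ℕ} (hs : 0 < s)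
    (h : u ≡ v + s [MOD 2 * s]) : cyclotomic (2 * s) ℤ ∣ X ^ u + X ^ v := by
  rw [← Ideal.mem_span_singleton, ← Ideal.Quotient.eq_zero_iff_mem]
  set x := Ideal.Quotient.mk (Ideal.span {cyclotomic (2 * s) ℤ}) X
  have hxs : x ^ s = -1 := by
    rw [eq_neg_iff_add_eq_zero, ← map_pow, ← map_one (Ideal.Quotient.mk _), ← map_add,
      Ideal.Quotient.eq_zero_iff_mem, Ideal.mem_span_singleton]
    exact cyclotomic_two_mul_dvd_X_pow_add_one hs
  have hx : x ^ (2 * s) = 1 := by rw [pow_mul', hxs]; ring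
  rw [map_add, map_pow, map_pow, pow_eq_pow_of_modEq h hx, pow_add, hxs]
  ring

theorem dvd_sum_of_involution {ι R : Type*} [CommRing R] {s : Finset ι} {f : ι → R} {d : R}
    (g : ι → ι) (hdvd : ∀ i ∈ s, d ∣ f i + f (g i)) (hne : ∀ i ∈ s, g i ≠ i)
    (hmem : ∀ i ∈ s, g i ∈ s) (hinv : ∀ i ∈ s, g (g i) = i) : d ∣ ∑ i ∈ s, f i := by
  rw [← Ideal.mem_span_singleton, ← Ideal.Quotient.eq_zero_iff_mem, map_sum]
  refine sum_involution (fun i _ => g i) (fun i hi => ?_) (fun i hi _ => hne i hi) hmem hinv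
  rw [← map_add, Ideal.Quotient.eq_zero_iff_mem, Ideal.mem_span_singleton]
  exact hdvd i hi

theorem modEq_add_of_two_mul_dvd_of_odd {s u v w : ℕ} (h₁ : 2 * s ∣ w + v) (h₂ : s ∣ u + w)
    (h₃ : Odd (u + w)) : u ≡ v + s [MOD 2 * s] := by
  obtain ⟨q, hq⟩ := h₂
  rw [hq] at h₃
  obtain ⟨r, rfl⟩ := (Nat.odd_mul.1 h₃).2
  obtain ⟨t, ht⟩ := h₁
  rw [Nat.modEq_iff_dvd]
  refine ⟨t - r, ?_⟩
  zify at hq ht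
  push_cast
  linear_combination ht - hq

theorem symmDiff_singleton_subset {S T : Finset ℕ} {j : ℕ} (hS : S ⊆ T) (hj : j ∈ T) :
    S ∆ {j} ⊆ T :=
  symmDiff_le_sup.trans (sup_le hS (singleton_subset_iff.2 hj))

theorem beta_symmDiff_symmDiff_modEq {a b s k : ℕ} {S : Finset ℕ} (hab : a < b)
    (hS : S ⊆ Ico 1 (2 ^ b + 2 ^ a)) (hk : k ∈ Ico 1 (2 ^ b + 2 ^ a))
    (hCk : 2 * s ∣ (2 ^ b + 2 ^ a).choose k) (hsa : s ∣ (2 ^ b + 2 ^ a).choose (2 ^ a)) :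
    beta (2 ^ b + 2 ^ a) (S ∆ {k} ∆ {2 ^ a}) ≡ beta (2 ^ b + 2 ^ a) S + s [MOD 2 * s] := by
  have hT := symmDiff_singleton_subset hS hk
  have h₁ := beta_symmDiff_singleton_add (mem_Ico.1 hk).2.le S
  have h₂ := beta_symmDiff_singleton_add (Nat.le_add_left (2 ^ a) (2 ^ b)) (S ∆ {k})
  have hU := upperPart_subset (j := 2 ^ a) hT
  rw [Nat.add_sub_cancel] at h₂ hU
  have hodd := (odd_choose_two_pow_add_two_pow hab.ne).mul
    ((odd_beta_two_pow a (lowerPart_subset hT)).mul (odd_beta_two_pow b hU))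
  exact modEq_add_of_two_mul_dvd_of_odd (h₁ ▸ hCk.mul_right _) (h₂ ▸ hsa.mul_right _) (h₂ ▸ hodd)

theorem cyclotomic_two_s_dvd_general (a b s k : ℕ) (hab : a < b) (hsodd : Odd s)
    (hsa : s ∣ (2 ^ b + 2 ^ a).choose (2 ^ a))
    (hk1 : 1 ≤ k) (hk2 : k ≤ 2 ^ b + 2 ^ a - 1)
    (hka : k ≠ 2 ^ a) (hkb : k ≠ 2 ^ b)
    (hk : s ∣ (2 ^ b + 2 ^ a).choose k) :
    Polynomial.cyclotomic (2 * s) ℤ ∣ Q (2 ^ b + 2 ^ a) := by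
  have hpow : 2 ^ a < 2 ^ b := Nat.pow_lt_pow_right one_lt_two hab
  have hkI : k ∈ Ico 1 (2 ^ b + 2 ^ a) := mem_Ico.2 ⟨hk1, by omega⟩
  have haI : 2 ^ a ∈ Ico 1 (2 ^ b + 2 ^ a) := mem_Ico.2 ⟨Nat.one_le_two_pow, by omega⟩
  have hCk : 2 * s ∣ (2 ^ b + 2 ^ a).choose k :=
    Nat.Coprime.mul_dvd_of_dvd_of_dvd (Nat.coprime_two_left.2 hsodd)
      (two_dvd_choose_two_pow_add_two_pow (by omega) hka hkb (by omega)) hk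
  refine dvd_sum_of_involution (fun S => S ∆ {k} ∆ {2 ^ a}) (fun S hS => ?_) (fun S _ => ?_)
    (fun S hS => ?_) (fun S _ => ?_)
  · rw [add_comm]
    exact cyclotomic_two_mul_dvd_X_pow_add_X_pow hsodd.pos
      (beta_symmDiff_symmDiff_modEq hab (mem_powerset.1 hS) hkI hCk hsa)
  · rw [symmDiff_assoc, Ne, symmDiff_eq_left, symmDiff_eq_bot, singleton_inj]
    exact hka
  · exact mem_powerset.2 <|
      symmDiff_singleton_subset (symmDiff_singleton_subset (mem_powerset.1 hS) hkI) haI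
  · rw [symmDiff_right_comm (S ∆ {k}), symmDiff_symmDiff_cancel_right,
      symmDiff_symmDiff_cancel_right]

/-- For `n = 2^b + 2^a` with `b > a ≥ 0` and `s` an odd positive integer dividing
`C(n, 2^a)` as well as `C(n, k)` for some `1 ≤ k ≤ n-1` with `k ∉ {2^a, 2^b}`,
the cyclotomic polynomial `Φ_{2s}` divides the descent set polynomial `Q_n(t)`. -/
theorem cyclotomic_two_s_dvd (a b s k : ℕ) (hab : a < b) (hs : 0 < s) (hsodd : Odd s)
    (hsa : s ∣ (2 ^ b + 2 ^ a).choose (2 ^ a))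
    (hk1 : 1 ≤ k) (hk2 : k ≤ 2 ^ b + 2 ^ a - 1)
    (hka : k ≠ 2 ^ a) (hkb : k ≠ 2 ^ b)
    (hk : s ∣ (2 ^ b + 2 ^ a).choose k) :
    Polynomial.cyclotomic (2 * s) ℤ ∣ Q (2 ^ b + 2 ^ a) :=
  cyclotomic_two_s_dvd_general a b s k hab hsodd hsa hk1 hk2 hka hkb hk
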